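/- Let C be a linear code of length n over a finite chain ring with p^s elements, and let d^\perp be the minimum distance of its dual. Then for every 0 \le \nu < d^\perp, the weight distribution of C satisfies the Pless-type power moment identity \sum_{j=0}^{n} \binom{j}{\nu} A_j = (|C| / p^{s\nu}) \binom{n}{n-\nu} (p^s - 1)^{\nu}. -/

import Mathlib

open Matrix Finset

/-- The Hamming weight of a vector: number of nonzero entries. -/
noncomputable def wt {R : Type*} [Zero R] {n : ℕ} (v : Fin n → R) : ℕ :=
  Nat.card {i : Fin n // v i ≠ 0}

/-- Minimum Hamming distance (= minimum weight of a nonzero codeword). -/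
noncomputable def minDist {R : Type*} [Zero R] {n : ℕ} (C : Set (Fin n → R)) : ℕ :=
  sInf {w | ∃ c ∈ C, c ≠ 0 ∧ wt c = w}

/-- Dual code w.r.t. the standard inner product. -/
def dualCode {R : Type*} [CommRing R] {n : ℕ} (C : Submodule R (Fin n → R)) :
    Submodule R (Fin n → R) where
  carrier := {v | ∀ c ∈ C, ∑ i, v i * c i = 0}
  add_mem' := by
    intro a b ha hb c hc
    simp only [Set.mem_setOf_eq] at *
    simp [Pi.add_apply, add_mul, Finset.sum_add_distrib, ha c hc, hb c hc]
  zero_mem' := by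
    intro c hc
    simp
  smul_mem' := by
    intro r v hv c hc
    simp only [Set.mem_setOf_eq] at *
    simp [Pi.smul_apply, smul_eq_mul, mul_assoc, ← Finset.mul_sum, hv c hc]

/-- The rank of a code: minimal number of generators. -/
noncomputable def rankCode {R M : Type*} [Ring R] [AddCommGroup M] [Module R M] (C : Submodule R M) : ℕ :=
  sInf {k | ∃ S : Finset M, S.card = k ∧ Submodule.span R (S : Set M) = C}

/-- `H` is a parity-check matrix for `C` : its kernel is exactly `C`. -/
def IsParityCheck {R : Type*} [CommRing R] {m n : ℕ} (H : Matrix (Fin m) (Fin n) R)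
    (C : Submodule R (Fin n → R)) : Prop :=
  ∀ v, v ∈ C ↔ H.mulVec v = 0

/-- A matrix (with rows indexed by `m`, columns by `ι`) has type `(t 0, …, t (s-1))` if exactly
`t i` of its rows are divisible by `γ^i` but not by `γ^(i+1)`. -/
def MatrixType {R : Type*} [CommRing R] {m ι : Type*} (γ : R) (s : ℕ)
    (M : m → ι → R) (t : ℕ → ℕ) : Prop :=
  ∀ i < s, Nat.card {r : m // (∃ u, M r = γ ^ i • u) ∧ ¬ ∃ u, M r = γ ^ (i + 1) • u} = t i

/-- A code has type `(k 0, …, k (s-1))` if it admits a generator matrix (rows span the code,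
no row is a combination of the others) of that row type. -/
def CodeHasType {R : Type*} [CommRing R] {n : ℕ} (γ : R) (s : ℕ)
    (C : Submodule R (Fin n → R)) (k : ℕ → ℕ) : Prop :=
  ∃ G : Matrix (Fin (∑ i ∈ Finset.range s, k i)) (Fin n) R,
    Submodule.span R (Set.range G) = C ∧
    (∀ j, G j ∉ Submodule.span R (Set.range G \ {G j})) ∧
    MatrixType γ s G k

/-- The weight distribution of a code. -/
noncomputable def weightDist {R : Type*} [CommRing R] {n : ℕ} (C : Submodule R (Fin n → R)) (l : ℕ) : ℕ :=
  Nat.card {c : Fin n → R // c ∈ C ∧ wt c = l}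

/-- A ring is a chain ring if its ideals are linearly ordered by inclusion. -/
def IsChainRing (R : Type*) [Ring R] : Prop := ∀ I J : Ideal R, I ≤ J ∨ J ≤ I

/-- `γ` generates the (unique) maximal ideal of `R`. -/
def MaxIdealGen {R : Type*} [CommRing R] (γ : R) : Prop :=
  Ideal.span {γ} ≠ ⊤ ∧ ∀ I : Ideal R, I ≠ ⊤ → I ≤ Ideal.span {γ}

/-!
Fix a set `T` of `ν < d^⊥` coordinates. The projection `C → R^T` is onto: otherwise, since a
finite chain ring is self-injective and every proper submodule of an `R`-module is killed by a
nonzero functional, some nonzero `f : R^T → R` vanishes on the image, and `f` is a dual codeword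
supported on `T`, of weight at most `ν`. All fibres of the projection then have the same size, so
with `q = |R|` exactly `|C| (q - 1)^ν / q^ν` codewords are nonzero on all of `T`. Summing over the
`n.choose ν` sets `T` counts each codeword `c` exactly `(wt c).choose ν` times.
-/

theorem Ideal.card_span_singleton_mul_card_ker {R : Type*} [CommRing R] [Finite R] (a : R) :
    Nat.card (Ideal.span {a}) * Nat.card (LinearMap.ker (LinearMap.toSpanSingleton R R a)) =
      Nat.card R := by
  rw [Submodule.card_eq_card_quotient_mul_card (LinearMap.ker (LinearMap.toSpanSingleton R R a)),
    Nat.card_congr (LinearMap.quotKerEquivRange _).toEquiv, ← LinearMap.span_singleton_eq_range,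
    Ideal.submodule_span_eq, mul_comm]

namespace IsChainRing

variable {R : Type*} [CommRing R] [Finite R]

theorem isPrincipalIdealRing (hR : IsChainRing R) : IsPrincipalIdealRing R := by
  refine ⟨fun I => ⟨?_⟩⟩
  obtain ⟨b, hb, hmax⟩ := Set.Finite.exists_maximalFor (fun b : R => Ideal.span {b}) I
    (Set.toFinite _) ⟨0, I.zero_mem⟩
  refine ⟨b, le_antisymm (fun y hy => ?_) (Ideal.span_singleton_le_iff_mem I |>.2 hb)⟩
  rcases hR (Ideal.span {y}) (Ideal.span {b}) with h | h
  · exact h (Ideal.mem_span_singleton_self y)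
  · exact hmax hy h (Ideal.mem_span_singleton_self y)

theorem mem_span_singleton_of_forall_mul_eq_zero (hR : IsChainRing R) {a b : R}
    (h : ∀ r, r * b = 0 → r * a = 0) : a ∈ Ideal.span {b} := by
  rcases hR (Ideal.span {a}) (Ideal.span {b}) with hab | hba
  · exact hab (Ideal.mem_span_singleton_self a)
  have hker : Nat.card (LinearMap.ker (LinearMap.toSpanSingleton R R b)) ≤
      Nat.card (LinearMap.ker (LinearMap.toSpanSingleton R R a)) :=
    Nat.card_mono (Set.toFinite _) fun r => h r
  have hcard : Nat.card (Ideal.span {a}) ≤ Nat.card (Ideal.span {b}) := by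
    have ha := Ideal.card_span_singleton_mul_card_ker a
    have hb := Ideal.card_span_singleton_mul_card_ker b
    by_contra! hlt
    have := Nat.mul_lt_mul_of_lt_of_le hlt hker Nat.card_pos
    omega
  have heq : Ideal.span {b} = Ideal.span {a} := by
    refine SetLike.coe_injective (Set.eq_of_subset_of_ncard_le hba ?_)
    rw [← Nat.card_coe_set_eq, ← Nat.card_coe_set_eq]
    exact hcard
  exact heq ▸ Ideal.mem_span_singleton_self a

theorem baer (hR : IsChainRing R) : Module.Baer R R := by
  intro I g
  obtain ⟨b, rfl⟩ := (hR.isPrincipalIdealRing.principal I).principal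
  have hb : b ∈ Ideal.span {b} := Ideal.mem_span_singleton_self b
  have hgb : g ⟨b, hb⟩ ∈ Ideal.span {b} := by
    refine hR.mem_span_singleton_of_forall_mul_eq_zero fun r hr => ?_
    have : r • (⟨b, hb⟩ : Ideal.span {b}) = 0 := Subtype.ext hr
    rw [← smul_eq_mul, ← g.map_smul, this, g.map_zero]
  obtain ⟨c, hc⟩ := Ideal.mem_span_singleton'.1 hgb
  refine ⟨LinearMap.toSpanSingleton R R c, fun x hx => ?_⟩
  obtain ⟨r, rfl⟩ := Ideal.mem_span_singleton'.1 hx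
  have : (⟨r * b, hx⟩ : Ideal.span {b}) = r • ⟨b, hb⟩ := rfl
  rw [this, g.map_smul, ← hc, LinearMap.toSpanSingleton_apply, smul_eq_mul, smul_eq_mul]
  ring

theorem exists_ne_zero_mul_eq_zero (hR : IsChainRing R) {I : Ideal R} (hI : I ≠ ⊤) :
    ∃ a ≠ 0, ∀ x ∈ I, a * x = 0 := by
  obtain ⟨b, rfl⟩ := (hR.isPrincipalIdealRing.principal I).principal
  have hb : b ∉ nonZeroDivisors R := fun h =>
    hI (Ideal.span_singleton_eq_top.2 (isUnit_iff_mem_nonZeroDivisors_of_finite.2 h))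
  obtain ⟨a, hab, ha⟩ : ∃ a, a * b = 0 ∧ a ≠ 0 := by
    simpa [mem_nonZeroDivisors_iff_right] using hb
  refine ⟨a, ha, fun x hx => ?_⟩
  obtain ⟨c, rfl⟩ := Ideal.mem_span_singleton.1 hx
  rw [← mul_assoc, hab, zero_mul]

theorem exists_linearMap_ne_zero_le_ker (hR : IsChainRing R) {M : Type*} [AddCommGroup M]
    [Module R M] {N : Submodule R M} (hN : N ≠ ⊤) :
    ∃ f : M →ₗ[R] R, f ≠ 0 ∧ N ≤ LinearMap.ker f := by
  have : Nontrivial (M ⧸ N) := Submodule.Quotient.nontrivial_iff.2 hN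
  obtain ⟨x, hx⟩ := exists_ne (0 : M ⧸ N)
  set q := LinearMap.toSpanSingleton R (M ⧸ N) x
  have hq : LinearMap.ker q ≠ ⊤ := fun h => hx <| by
    simpa [q] using (h ▸ Submodule.mem_top : (1 : R) ∈ LinearMap.ker q)
  obtain ⟨a, ha0, ha⟩ := hR.exists_ne_zero_mul_eq_zero hq
  have hle : LinearMap.ker q ≤ LinearMap.ker (LinearMap.toSpanSingleton R R a) :=
    fun r hr => by simpa [mul_comm] using ha r hr
  -- `1 ↦ a` is well defined on `R ⧸ ann x ≅ R x` since `a` kills `ann x`; extend it from `R x`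
  -- to `M ⧸ N` by self-injectivity.
  obtain ⟨h, hh⟩ := hR.baer.extension_property ((LinearMap.ker q).liftQ q le_rfl)
    (LinearMap.ker_eq_bot.1 (Submodule.ker_liftQ_eq_bot _ _ _ le_rfl))
    ((LinearMap.ker q).liftQ _ hle)
  refine ⟨h ∘ₗ N.mkQ, fun h0 => ha0 ?_, fun y hy => by
    simp [(Submodule.Quotient.mk_eq_zero N).2 hy]⟩
  obtain ⟨m, rfl⟩ := N.mkQ_surjective x
  have hm : h (N.mkQ m) = a := by
    have := LinearMap.congr_fun hh (Submodule.Quotient.mk 1)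
    rwa [LinearMap.comp_apply, Submodule.liftQ_apply, Submodule.liftQ_apply,
      LinearMap.toSpanSingleton_apply, LinearMap.toSpanSingleton_apply, one_smul, one_smul] at this
  rw [← hm]
  exact LinearMap.congr_fun h0 m

end IsChainRing

theorem AddMonoidHom.card_filter_mem_mul_card {G H : Type*} [AddGroup G] [Fintype G] [AddGroup H]
    [Fintype H] [DecidableEq H] (f : G →+ H) (hf : Function.Surjective f) (S : Finset H) :
    #{g | f g ∈ S} * Fintype.card H = Fintype.card G * #S := by
  have hfiber : ∀ S : Finset H, #{g | f g ∈ S} = #S * #{g | f g = 0} := fun S => by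
    rw [← sum_card_fiberwise_eq_card_filter,
      sum_congr rfl fun h _ => card_fiber_eq_of_mem_range f (hf h) (hf 0), sum_const, smul_eq_mul]
  have huniv := hfiber univ
  rw [filter_true_of_mem fun g _ => mem_univ (f g), card_univ, card_univ] at huniv
  rw [hfiber S, huniv]
  ring

theorem sum_choose_hammingNorm {α ι β : Type*} [Fintype ι] [DecidableEq ι] [Zero β]
    [DecidableEq β] (s : Finset α) (x : α → ι → β) (k : ℕ) :
    ∑ a ∈ s, (hammingNorm (x a)).choose k =
      ∑ T ∈ powersetCard k univ, #{a ∈ s | ∀ i ∈ T, x a i ≠ 0} := by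
  have hchoose : ∀ a, (hammingNorm (x a)).choose k =
      #{T ∈ powersetCard k univ | ∀ i ∈ T, x a i ≠ 0} := fun a => by
    rw [hammingNorm, ← card_powersetCard]
    congr 1
    ext T
    simp [mem_powersetCard, subset_iff, and_comm]
  simp_rw [hchoose]
  exact sum_card_bipartiteAbove_eq_sum_card_bipartiteBelow (fun a T => ∀ i ∈ T, x a i ≠ 0)

section Code

variable {R : Type*} {n : ℕ}

theorem wt_eq_hammingNorm [Zero R] [DecidableEq R] (v : Fin n → R) : wt v = hammingNorm v := by
  rw [wt, Nat.card_eq_fintype_card, Fintype.card_subtype]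
  rfl

theorem wt_le [Zero R] (v : Fin n → R) : wt v ≤ n := by
  classical
  simpa [wt_eq_hammingNorm] using hammingNorm_le_card_fintype (x := v)

theorem exists_ne_zero_of_lt_minDist [Zero R] {S : Set (Fin n → R)} {ν : ℕ}
    (h : ν < minDist S) : ∃ v ∈ S, v ≠ 0 := by
  by_contra! h0
  have : {w | ∃ c ∈ S, c ≠ 0 ∧ wt c = w} = ∅ :=
    Set.eq_empty_of_forall_notMem fun w ⟨c, hc, hc0, _⟩ => hc0 (h0 c hc)
  simp [minDist, this] at h

theorem lt_wt_of_lt_minDist [Zero R] {S : Set (Fin n → R)} {ν : ℕ} (h : ν < minDist S)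
    {v : Fin n → R} (hv : v ∈ S) (hv0 : v ≠ 0) : ν < wt v :=
  h.trans_le (Nat.sInf_le ⟨v, hv, hv0, rfl⟩)

theorem funLeft_comp_subtype_surjective [CommRing R] [Finite R] (hR : IsChainRing R)
    (C : Submodule R (Fin n → R)) (T : Finset (Fin n))
    (hT : ∀ v ∈ dualCode C, v ≠ 0 → #T < wt v) :
    Function.Surjective (LinearMap.funLeft R R ((↑) : T → Fin n) ∘ₗ C.subtype) := by
  classical
  set P := LinearMap.funLeft R R ((↑) : T → Fin n)
  rw [← LinearMap.range_eq_top]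
  by_contra hne
  obtain ⟨f, hf0, hf⟩ := hR.exists_linearMap_ne_zero_le_ker hne
  let v : Fin n → R := fun i => (f ∘ₗ P) fun j => if i = j then 1 else 0
  have hfP : ∀ x, (f ∘ₗ P) x = ∑ i, v i * x i := fun x => by
    simp only [LinearMap.pi_apply_eq_sum_univ (f ∘ₗ P) x, v, smul_eq_mul, mul_comm]
  have hv : v ∈ dualCode C := fun c hc => by
    rw [← hfP]
    exact hf ⟨⟨c, hc⟩, rfl⟩
  have hv0 : v ≠ 0 := fun h0 => hf0 <| by
    have : f ∘ₗ P = 0 := LinearMap.ext fun x => by simp [hfP, h0]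
    exact (LinearMap.cancel_right (LinearMap.funLeft_surjective_of_injective _ _ _
      Subtype.val_injective)).1 (this.trans (LinearMap.zero_comp P).symm)
  have hwt : wt v ≤ #T := by
    rw [wt_eq_hammingNorm, hammingNorm]
    refine card_le_card fun i hi => ?_
    by_contra hiT
    refine (mem_filter.1 hi).2 ?_
    have : P (fun j => if i = j then 1 else 0) = 0 :=
      funext fun j => if_neg fun h : i = j => hiT (h ▸ j.2)
    simp [v, this]
  exact (hT v hv hv0).not_ge hwt

theorem card_filter_forall_ne_zero_mul_card_pow [CommRing R] [Fintype R] [DecidableEq R]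
    (hR : IsChainRing R) (C : Submodule R (Fin n → R)) [DecidablePred (· ∈ C)]
    (T : Finset (Fin n)) (hT : ∀ v ∈ dualCode C, v ≠ 0 → #T < wt v) :
    #{c : C | ∀ i ∈ T, (c : Fin n → R) i ≠ 0} * Fintype.card R ^ #T =
      Fintype.card C * (Fintype.card R - 1) ^ #T := by
  have h := AddMonoidHom.card_filter_mem_mul_card
    (LinearMap.funLeft R R ((↑) : T → Fin n) ∘ₗ C.subtype).toAddMonoidHom
    (funLeft_comp_subtype_surjective hR C T hT) (Fintype.piFinset fun _ => {0}ᶜ)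
  rw [Fintype.card_fun, Fintype.card_coe, Fintype.card_piFinset, prod_const, card_compl,
    card_singleton, card_univ, Fintype.card_coe] at h
  convert h using 3
  ext c
  simp

theorem sum_choose_mul_weightDist [CommRing R] [Fintype R] [DecidableEq R]
    (C : Submodule R (Fin n → R)) [DecidablePred (· ∈ C)] (k : ℕ) :
    ∑ j ∈ range (n + 1), j.choose k * weightDist C j =
      ∑ c : C, (hammingNorm (c : Fin n → R)).choose k := by
  have hA : ∀ j, weightDist C j = #{c : C | wt (c : Fin n → R) = j} := fun j => by
    rw [weightDist,
      ← Nat.card_congr (Equiv.subtypeSubtypeEquivSubtypeInter (· ∈ C) (wt · = j)),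
      Nat.card_eq_fintype_card, Fintype.card_subtype]
  rw [← sum_fiberwise_of_maps_to (g := fun c : C => wt (c : Fin n → R)) (t := range (n + 1))
    fun c _ => mem_range.2 (Nat.lt_succ_of_le (wt_le _))]
  refine sum_congr rfl fun j _ => ?_
  rw [hA, sum_congr rfl fun c hc => by rw [← wt_eq_hammingNorm, (mem_filter.1 hc).2], sum_const,
    smul_eq_mul, mul_comm]

end Code

theorem stmt_15 {R : Type*} [CommRing R] [Fintype R] (hR : IsChainRing R)
    (p s : ℕ) (hcard : Nat.card R = p ^ s)
    {n : ℕ} (C : Submodule R (Fin n → R)) (ν : ℕ)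
    (hν : ν < minDist (dualCode C : Set (Fin n → R))) :
    (∑ j ∈ Finset.range (n + 1), j.choose ν * weightDist C j) * p ^ (s * ν)
      = Nat.card C * n.choose (n - ν) * (p ^ s - 1) ^ ν := by
  classical
  obtain ⟨v, hv, hv0⟩ := exists_ne_zero_of_lt_minDist hν
  have hνn : ν ≤ n := (lt_wt_of_lt_minDist hν hv hv0).le.trans (wt_le v)
  have hq : Fintype.card R = p ^ s := by rw [← Nat.card_eq_fintype_card, hcard]
  rw [sum_choose_mul_weightDist, sum_choose_hammingNorm, sum_mul,
    sum_congr rfl (g := fun _ => Nat.card C * (p ^ s - 1) ^ ν) fun T hT => ?count, sum_const,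
    card_powersetCard, card_univ, Fintype.card_fin, Nat.choose_symm hνn, smul_eq_mul]
  · ring
  case count =>
    obtain rfl := (mem_powersetCard.1 hT).2
    rw [pow_mul, ← hq, Nat.card_eq_fintype_card]
    -- `convert` reconciles the decidability instances of `∀ i ∈ T, _`: the generic one from
    -- `sum_choose_hammingNorm` and `Nat.decidableForallFin` in the lemma.
    convert card_filter_forall_ne_zero_mul_card_pow hR C T
      (fun w hw hw0 => lt_wt_of_lt_minDist hν hw hw0) using 4
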